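/- arXiv:cs/0410013 — 5 statements merged into one kernel-verified Lean document; each statement's English description precedes it below -/
import Mathlib

section
/- Let k ≥ 0 and define p(1) = 1, p(i) = F(i-1) for 2 ≤ i ≤ k+3, and p(i) = F(i-1) + F(i-k-3) for i ≥ k+4. Then for every i with k+4 ≤ i, the identity p(i) = 1 + p(1) + p(2) + ... + p(i-2) holds. -/
/-!
Past the prefix, `p i = F(i-1) + F(i-k-3)` is a sum of two shifted Fibonacci sequences, so `p`
obeys the Fibonacci recurrence from index `k + 3` on. Adding `p (n + 1)` to both sides of
`p (n + 2) = 1 + ∑_{j ≤ n} p j` then propagates the identity, and the base case `i = k + 4`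
reduces to `∑_{j ≤ m} p j = F(m + 1)` on the Fibonacci prefix, since `F(1) = 1`.
-/

open Finset

theorem eq_add_sum_Icc_of_add_two_eq {M : Type*} [AddCommMonoid M] (p : ℕ → M) (c : M)
    (m : ℕ) (hrec : ∀ n, m < n → p (n + 2) = p (n + 1) + p n)
    (hbase : p (m + 2) = c + ∑ j ∈ Icc 1 m, p j) :
    ∀ n, m ≤ n → p (n + 2) = c + ∑ j ∈ Icc 1 n, p j := by
  intro n hn
  induction n, hn using Nat.le_induction with
  | base => exact hbase
  | succ n hn ih =>
    rw [sum_Icc_succ_top (by omega), hrec (n + 1) (by omega), ih]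
    abel

theorem sum_Icc_one_eq_fib_succ {p : ℕ → ℕ} {m : ℕ} (hp1 : p 1 = 1)
    (hpF : ∀ i, 2 ≤ i → i ≤ m → p i = Nat.fib (i - 1)) (hm : 1 ≤ m) :
    ∑ j ∈ Icc 1 m, p j = Nat.fib (m + 1) := by
  induction m, hm using Nat.le_induction with
  | base => simp [hp1]
  | succ n hn ih =>
    rw [sum_Icc_succ_top (by omega), ih fun i hi₂ hin ↦ hpF i hi₂ (by omega),
      hpF (n + 1) (by omega) le_rfl, Nat.add_sub_cancel, Nat.fib_add_two,
      Nat.fib_add_one (by omega), add_comm]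

theorem add_two_eq_of_eq_fib_add_fib {p : ℕ → ℕ} {k : ℕ}
    (hp : ∀ t, p (t + (k + 3)) = Nat.fib (t + (k + 2)) + Nat.fib t) :
    ∀ n, k + 2 < n → p (n + 2) = p (n + 1) + p n := by
  intro n hn
  obtain ⟨t, rfl⟩ : ∃ t, n = t + (k + 3) := ⟨n - (k + 3), by omega⟩
  have h₁ := hp (t + 1)
  have h₂ := hp (t + 2)
  rw [show t + 2 + (k + 2) = t + (k + 2) + 2 by ring, Nat.fib_add_two, Nat.fib_add_two] at h₂
  rw [show t + 1 + (k + 2) = t + (k + 2) + 1 by ring] at h₁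
  rw [show t + (k + 3) + 2 = t + 2 + (k + 3) by ring,
    show t + (k + 3) + 1 = t + 1 + (k + 3) by ring, h₁, h₂, hp]
  ring

/-- For the minimizing k-ordered sequence, each weight p(i) with i ≥ k+4 exceeds the sum
of all earlier weights p(1)+...+p(i-2) by exactly one. -/
theorem min_k_ordered_sum_identity (k : ℕ) (p : ℕ → ℕ)
    (hp1 : p 1 = 1)
    (hpF : ∀ i : ℕ, 2 ≤ i → i ≤ k + 3 → p i = Nat.fib (i - 1))
    (hpW : ∀ i : ℕ, k + 4 ≤ i → p i = Nat.fib (i - 1) + Nat.fib (i - k - 3)) :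
    ∀ i : ℕ, k + 4 ≤ i → p i = 1 + ∑ j ∈ Finset.Icc 1 (i - 2), p j := by
  have hfib : ∀ t, p (t + (k + 3)) = Nat.fib (t + (k + 2)) + Nat.fib t := by
    rintro (_ | t)
    · simpa using hpF (k + 3) (by omega) le_rfl
    · rw [hpW _ (by omega), show t + 1 + (k + 3) - 1 = t + 1 + (k + 2) by omega,
        show t + 1 + (k + 3) - k - 3 = t + 1 by omega]
  have hbase : p (k + 2 + 2) = 1 + ∑ j ∈ Icc 1 (k + 2), p j := by
    rw [sum_Icc_one_eq_fib_succ hp1 (fun i hi₂ hik ↦ hpF i hi₂ (by omega)) (by omega),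
      hpW _ le_rfl, show k + 2 + 2 - 1 = k + 2 + 1 by omega,
      show k + 2 + 2 - k - 3 = 1 by omega, Nat.fib_one, add_comm]
  intro i hi
  obtain ⟨n, rfl⟩ : ∃ n, i = n + 2 := ⟨i - 2, by omega⟩
  exact eq_add_sum_Icc_of_add_two_eq p 1 (k + 2) (add_two_eq_of_eq_fib_add_fib hfib) hbase n
    (by omega)
end

section
/- For every integer n ≥ 2, (n-1)·F(1) + ∑_{i=2}^{n} (n - i + 1) · F(i) = F(n+4) - (n+4). -/
/-! Summing the weights `n - i + 1` row by row turns the weighted sum into `∑_{k ≤ n} ∑_{i ≤ k} F i`,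
and each inner sum is `F (k + 2) - 1`; summing once more gives `F (n + 4) - (n + 3)`. -/

open Finset

namespace Nat

theorem sum_range_fib_int (n : ℕ) : ∑ i ∈ range n, (fib i : ℤ) = fib (n + 1) - 1 := by
  rw [fib_succ_eq_succ_sum]
  push_cast
  ring

theorem sum_range_succ_mul_fib (n : ℕ) :
    ∑ i ∈ range (n + 1), ((n : ℤ) - i + 1) * fib i = fib (n + 4) - (n + 3) := by
  induction n with
  | zero => simp [fib_add_two]
  | succ n ih =>
    have hweights : ∑ i ∈ range (n + 2), (((n + 1 : ℕ) : ℤ) - i + 1) * fib i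
        = ∑ i ∈ range (n + 2), ((n : ℤ) - i + 1) * fib i + ∑ i ∈ range (n + 2), (fib i : ℤ) := by
      rw [← sum_add_distrib]
      exact sum_congr rfl fun i _ => by push_cast; ring
    have htop_vanishes : ∑ i ∈ range (n + 2), ((n : ℤ) - i + 1) * fib i
        = ∑ i ∈ range (n + 1), ((n : ℤ) - i + 1) * fib i := by
      rw [sum_range_succ]
      push_cast
      ring
    rw [hweights, htop_vanishes, ih, sum_range_fib_int, fib_add_two (n := n + 3)]
    push_cast
    ring

end Nat

theorem fib_external_path_length_general (n : ℕ) :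
    ((n : ℤ) - 1) * Nat.fib 1 + ∑ i ∈ Finset.Icc 2 n, ((n : ℤ) - i + 1) * Nat.fib i
      = (Nat.fib (n + 4) : ℤ) - (n + 4) := by
  obtain _ | n := n
  · simp [Nat.fib_add_two]
  have hsplit : ∑ i ∈ range (n + 1 + 1), (((n + 1 : ℕ) : ℤ) - i + 1) * Nat.fib i
      = ((n + 1 : ℕ) : ℤ) * Nat.fib 1 + ∑ i ∈ Icc 2 (n + 1), (((n + 1 : ℕ) : ℤ) - i + 1) * Nat.fib i := by
    rw [← sum_range_add_sum_Ico _ (by omega : 2 ≤ n + 1 + 1), ← Ico_add_one_right_eq_Icc]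
    simp [sum_range_succ]
  linear_combination Nat.sum_range_succ_mul_fib (n + 1) - hsplit

/-- For n ≥ 2, (n-1)·F(1) + ∑_{i=2}^{n} (n-i+1)·F(i) = F(n+4) - (n+4). -/
theorem fib_external_path_length (n : ℕ) (hn : 2 ≤ n) :
    ((n : ℤ) - 1) * Nat.fib 1 + ∑ i ∈ Finset.Icc 2 n, ((n : ℤ) - i + 1) * Nat.fib i
      = (Nat.fib (n + 4) : ℤ) - (n + 4) :=
  fib_external_path_length_general n
end

section
/- For every integer n ≥ 3, (n-1)·1 + ∑_{i=2}^{n} (n - i + 1) · F(i-1) = F(n+3) - 3. -/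
/-!
Since `n + 1 - i + 1 = (n - i + 1) + 1`, passing from `n` to `n + 1` adds the partial sum
`F(1) + ⋯ + F(n) = F(n + 2) - 1` to the weighted sum, so it equals `F(n + 3) - n - 2` by
induction; adding the weight `n - 1` of the first leaf gives `F(n + 3) - 3`.
-/

open Finset

namespace Nat

theorem sum_Icc_two_fib_pred (n : ℕ) :
    ∑ i ∈ Icc 2 n, (fib (i - 1) : ℤ) = fib (n + 1) - 1 := by
  induction n with
  | zero => rfl
  | succ n ih =>
    rcases n.eq_zero_or_pos with rfl | hn
    · rfl
    rw [sum_Icc_succ_top (by omega), ih, Nat.add_sub_cancel, fib_add_two]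
    push_cast
    ring

theorem sum_Icc_two_mul_fib_pred (n : ℕ) :
    ∑ i ∈ Icc 2 n, ((n : ℤ) - i + 1) * fib (i - 1) = fib (n + 3) - n - 2 := by
  induction n with
  | zero => rfl
  | succ n ih =>
    rcases n.eq_zero_or_pos with rfl | hn
    · rfl
    have hweights : ∑ i ∈ Icc 2 n, ((n + 1 : ℕ) - (i : ℤ) + 1) * fib (i - 1)
        = ∑ i ∈ Icc 2 n, ((n : ℤ) - i + 1) * fib (i - 1) + ∑ i ∈ Icc 2 n, (fib (i - 1) : ℤ) := by
      rw [← sum_add_distrib]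
      exact sum_congr rfl fun i _ => by push_cast; ring
    rw [sum_Icc_succ_top (by omega), hweights, ih, sum_Icc_two_fib_pred, Nat.add_sub_cancel,
      show fib (n + 1 + 3) = fib (n + 2) + fib (n + 3) from fib_add_two, fib_add_two (n := n)]
    push_cast
    ring

end Nat

theorem shifted_fib_external_path_length_general (n : ℕ) :
    ((n : ℤ) - 1) * 1 + ∑ i ∈ Finset.Icc 2 n, ((n : ℤ) - i + 1) * Nat.fib (i - 1)
      = (Nat.fib (n + 3) : ℤ) - 3 := by
  rw [Nat.sum_Icc_two_mul_fib_pred]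
  ring

/-- For n ≥ 3, (n-1)·1 + ∑_{i=2}^{n} (n-i+1)·F(i-1) = F(n+3) - 3. -/
theorem shifted_fib_external_path_length (n : ℕ) (hn : 3 ≤ n) :
    ((n : ℤ) - 1) * 1 + ∑ i ∈ Finset.Icc 2 n, ((n : ℤ) - i + 1) * Nat.fib (i - 1)
      = (Nat.fib (n + 3) : ℤ) - 3 :=
  shifted_fib_external_path_length_general n
end

section
/- Fix integers n ≥ 3 and k with 0 ≤ k ≤ n-3. Define p(1) = 1, p(i) = F(i-1) for 2 ≤ i ≤ k+3, and p(i) = F(i-1) + F(i-k-3) for k+4 ≤ i ≤ n. Then (n-1)·p(1) + ∑_{i=2}^{n} (n - i + 1)·p(i) = F(n+3) + F(n-k+1) - (n - k + 3). -/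
/-!
Write `p i` as `F(i-1)` on `2..n` plus the correction `F(i-k-3)` on `k+4..n`. With weights
`n - i + 1`, both pieces reduce to `∑_{j<m} (m - j) F(j+1) = F(m+4) - m - 3` (for `m = n - 1` and
`m = n - k - 3`), which follows by induction from `∑_{j<m} F(j+1) = F(m+2) - 1`.
-/

open Finset

theorem Nat.sum_range_fib_succ (m : ℕ) :
    ∑ j ∈ range m, (fib (j + 1) : ℤ) = fib (m + 2) - 1 := by
  have h := fib_succ_eq_succ_sum (m + 1)
  rw [sum_range_succ', fib_zero, add_zero] at h
  rw [h]
  push_cast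
  ring

theorem Nat.sum_range_sub_mul_fib_succ (m : ℕ) :
    ∑ j ∈ range m, ((m : ℤ) - j) * fib (j + 1) = fib (m + 4) - m - 3 := by
  induction m with
  | zero => simp [fib_add_two]
  | succ m ih =>
    have hsplit : ∀ j : ℕ, (((m + 1 : ℕ) : ℤ) - j) * fib (j + 1)
        = ((m : ℤ) - j) * fib (j + 1) + fib (j + 1) := fun j => by push_cast; ring
    simp only [hsplit, sum_add_distrib, sum_range_fib_succ]
    rw [sum_range_succ, ih, fib_add_two (n := m + 3), fib_add_two (n := m + 2)]
    push_cast
    ring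

theorem Nat.sum_Ioc_sub_mul_fib_sub {c n : ℕ} (h : c ≤ n) :
    ∑ i ∈ Ioc c n, ((n : ℤ) - i + 1) * fib (i - c) = fib (n - c + 4) - n + c - 3 := by
  obtain ⟨m, rfl⟩ := Nat.exists_eq_add_of_le h
  rw [← Icc_add_one_left_eq_Ioc, ← Ico_add_one_right_eq_Icc, sum_Ico_eq_sum_range,
    show c + m + 1 - (c + 1) = m by omega, show c + m - c + 4 = m + 4 by omega]
  have hterm : ∀ j : ℕ,
      (((c + m : ℕ) : ℤ) - ((c + 1 + j : ℕ) : ℤ) + 1) * fib (c + 1 + j - c) =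
        ((m : ℤ) - j) * fib (j + 1) := fun j => by
    rw [show c + 1 + j - c = j + 1 by omega]
    push_cast
    ring
  simp only [hterm, sum_range_sub_mul_fib_succ]
  push_cast
  ring

/-- The weighted external path length of the left-sided elongated tree for the minimizing
k-ordered sequence equals F(n+3) + F(n-k+1) - (n-k+3). -/
theorem min_k_ordered_huffman_cost (n k : ℕ) (hn : 3 ≤ n) (hk : k ≤ n - 3)
    (p : ℕ → ℕ)
    (hp1 : p 1 = 1)
    (hpF : ∀ i : ℕ, 2 ≤ i → i ≤ k + 3 → p i = Nat.fib (i - 1))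
    (hpW : ∀ i : ℕ, k + 4 ≤ i → i ≤ n → p i = Nat.fib (i - 1) + Nat.fib (i - k - 3)) :
    ((n : ℤ) - 1) * p 1 + ∑ i ∈ Finset.Icc 2 n, ((n : ℤ) - i + 1) * p i
      = (Nat.fib (n + 3) : ℤ) + Nat.fib (n - k + 1) - ((n : ℤ) - k + 3) := by
  have hkn : k + 3 ≤ n := by omega
  have hsplit (f : ℕ → ℤ) :
      ∑ i ∈ Ioc 1 n, f i = ∑ i ∈ Ioc 1 (k + 3), f i + ∑ i ∈ Ioc (k + 3) n, f i :=
    (sum_Ioc_consecutive f (by omega) hkn).symm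
  have hlow : ∀ i ∈ Ioc 1 (k + 3),
      ((n : ℤ) - i + 1) * p i = ((n : ℤ) - i + 1) * Nat.fib (i - 1) :=
    fun i hi => by rw [mem_Ioc] at hi; rw [hpF i hi.1 hi.2]
  have hhigh : ∀ i ∈ Ioc (k + 3) n, ((n : ℤ) - i + 1) * p i
      = ((n : ℤ) - i + 1) * Nat.fib (i - 1) + ((n : ℤ) - i + 1) * Nat.fib (i - (k + 3)) :=
    fun i hi => by rw [mem_Ioc] at hi; rw [hpW i hi.1 hi.2, Nat.sub_sub]; push_cast; ring
  have hsum : ∑ i ∈ Icc 2 n, ((n : ℤ) - i + 1) * p i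
      = ∑ i ∈ Ioc 1 n, ((n : ℤ) - i + 1) * Nat.fib (i - 1)
        + ∑ i ∈ Ioc (k + 3) n, ((n : ℤ) - i + 1) * Nat.fib (i - (k + 3)) := by
    rw [show Icc 2 n = Ioc 1 n from Icc_add_one_left_eq_Ioc 1 n, hsplit, hsplit,
      sum_congr rfl hlow, sum_congr rfl hhigh, sum_add_distrib, add_assoc]
  rw [hsum, hp1, Nat.sum_Ioc_sub_mul_fib_sub (by omega : 1 ≤ n), Nat.sum_Ioc_sub_mul_fib_sub hkn,
    show n - 1 + 4 = n + 3 by omega, show n - (k + 3) + 4 = n - k + 1 by omega]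
  push_cast
  ring
end

section
/- For every integer n ≥ 3, (n-1)·1 + (n-1)·1 + ∑_{i=3}^{n} (n - i + 1)·L(i-2) = F(n+3) + F(n+1) - (n+3), where L is the Lucas sequence. -/
/-!
Raising `n` by one adds `2` plus the partial sum `L(1) + ⋯ + L(n-1)` to the left-hand side.
Since `L(k+1) = F(k) + F(k+2)`, that partial sum is `F(n) + F(n+2) - 3`, and the claim follows by
induction on `n`.
-/

open Finset

theorem Finset.sum_Icc_succ_mul_sub_add_one {R : Type*} [CommRing R] (f : ℕ → R) (a n : ℕ) :
    ∑ i ∈ Icc a (n + 1), (((n + 1 : ℕ) : R) - i + 1) * f i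
      = ∑ i ∈ Icc a n, ((n : R) - i + 1) * f i + ∑ i ∈ Icc a (n + 1), f i := by
  have hweight : ∀ i, (((n + 1 : ℕ) : R) - i + 1) * f i = ((n : R) - i + 1) * f i + f i := by
    intro i; push_cast; ring
  simp only [hweight, sum_add_distrib, add_left_inj]
  rcases le_or_gt a (n + 1) with ha | ha
  · rw [sum_Icc_succ_top ha]; push_cast; ring
  · rw [Icc_eq_empty_of_lt ha, Icc_eq_empty_of_lt (by omega), sum_empty]

section LucasSequence

variable {L : ℕ → ℕ} (hL1 : L 1 = 1) (hL2 : L 2 = 3)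
  (hLrec : ∀ m : ℕ, 1 ≤ m → L (m + 2) = L (m + 1) + L m)
include hL1 hL2 hLrec

theorem lucas_succ_eq_fib_add_fib (k : ℕ) : L (k + 1) = Nat.fib k + Nat.fib (k + 2) := by
  induction k using Nat.twoStepInduction with
  | zero => simpa using hL1
  | one => simp [hL2, Nat.fib_add_two]
  | more k ih₀ ih₁ =>
    rw [hLrec (k + 1) (by omega), ih₀, ih₁]
    simp only [Nat.fib_add_two]
    ring

theorem sum_Icc_lucas (m : ℕ) :
    ∑ i ∈ Icc 3 (m + 2), (L (i - 2) : ℤ) = Nat.fib (m + 1) + Nat.fib (m + 3) - 3 := by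
  induction m with
  | zero => simp [Nat.fib_add_two]
  | succ m ih =>
    rw [sum_Icc_succ_top (by omega), ih, show m + 2 + 1 - 2 = m + 1 by omega,
      lucas_succ_eq_fib_add_fib hL1 hL2 hLrec]
    simp only [Nat.fib_add_two]
    push_cast
    ring

end LucasSequence

/-- The weighted external path length of the left-sided elongated tree with leaf weights
1, 1, L(1), ..., L(n-2) equals F(n+3) + F(n+1) - (n+3). -/
theorem min_zero_ordered_huffman_cost (L : ℕ → ℕ)
    (hL1 : L 1 = 1) (hL2 : L 2 = 3)
    (hLrec : ∀ m : ℕ, 1 ≤ m → L (m + 2) = L (m + 1) + L m)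
    (n : ℕ) (hn : 3 ≤ n) :
    ((n : ℤ) - 1) * 1 + ((n : ℤ) - 1) * 1
        + ∑ i ∈ Finset.Icc 3 n, ((n : ℤ) - i + 1) * L (i - 2)
      = (Nat.fib (n + 3) : ℤ) + Nat.fib (n + 1) - (n + 3) := by
  obtain ⟨m, rfl⟩ : ∃ m, n = m + 2 := ⟨n - 2, by omega⟩
  clear hn
  induction m with
  | zero => simp [Nat.fib_add_two]
  | succ m ih =>
    rw [show m + 1 + 2 = m + 2 + 1 by omega, sum_Icc_succ_mul_sub_add_one,
      sum_Icc_lucas hL1 hL2 hLrec (m + 1)]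
    simp only [Nat.fib_add_two] at ih ⊢
    push_cast at ih ⊢
    linarith
end
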